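/- Let m ≥ 2 be an integer, p, q integers with 1 ≤ p ≤ m−1, 1 ≤ q ≤ m+1 and p ≡ q (mod 2), and set p' = m−p, q' = m+2−q. Then for all positive integers u, v with u ≡ v (mod 2) and uv ≤ p'q' − pq, one has h^m_{u,v} ≠ h^m_{p,q} + pq/2. (Hence the Kac determinant det_{(p'q'−pq)/2}(c_m, h^m_{p,q} + pq/2) is nonzero.) -/

import Mathlib

/-!
Adding `pq/2` to `h_{p,q}` gives `h_{p,-q}`, so `h_{u,v} = h_{p,q} + pq/2` means
`(m+2)u - mv = ±((m+2)p + mq)`. Either sign yields `(m+2)d = me` with `0 < d` and `d ≡ e (mod 2)`,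
which forces `d ≥ m` and `e ≥ m+2`. Hence `u ≥ m+p, v ≥ m+2-q` or `u ≥ m-p, v ≥ m+2+q`, and in
both cases `uv > (m-p)(m+2-q) - pq`.
-/

/-- `h^m_{p,q} = (((m+2)p − mq)² − 4) / (8m(m+2))`. -/
noncomputable def hPQ (m : ℝ) (p q : ℤ) : ℝ :=
  (((m + 2) * (p : ℝ) - m * (q : ℝ)) ^ 2 - 4) / (8 * m * (m + 2))

lemma hPQ_add_mul_div_two {m : ℝ} (hm : m ≠ 0) (hm2 : m + 2 ≠ 0) (p q : ℤ) :
    hPQ m p q + (p : ℝ) * q / 2 = hPQ m p (-q) := by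
  unfold hPQ
  field_simp
  push_cast
  ring

lemma hPQ_eq_hPQ_iff {m : ℝ} (hm : m ≠ 0) (hm2 : m + 2 ≠ 0) (u v p q : ℤ) :
    hPQ m u v = hPQ m p q ↔
      ((m + 2) * (u : ℝ) - m * v) ^ 2 = ((m + 2) * (p : ℝ) - m * q) ^ 2 := by
  unfold hPQ
  rw [div_left_inj' (by positivity), sub_left_inj]

/- Write `2d = mk`; `k = 1` forces `e = d + 1`, against the parity condition, so `k ≥ 2`. -/
lemma le_of_add_two_mul_eq_mul {m d e : ℤ} (hm : 0 < m) (hd : 0 < d)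
    (h : (m + 2) * d = m * e) (hpar : d % 2 = e % 2) : m ≤ d ∧ m + 2 ≤ e := by
  obtain ⟨k, hk⟩ : m ∣ 2 * d := ⟨e - d, by linarith⟩
  have hk1 : 1 ≤ k := by nlinarith
  have hmd : m ≤ d := by
    rcases hk1.eq_or_lt with rfl | hk2
    · have he : e = d + 1 := by nlinarith
      omega
    · nlinarith
  exact ⟨hmd, le_of_mul_le_mul_left (by nlinarith) hm⟩

lemma bound_lt_mul_of_sq_eq_sq {m p q u v : ℤ} (hm : 0 < m) (hp1 : 1 ≤ p) (hp2 : p ≤ m - 1)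
    (hq1 : 1 ≤ q) (hq2 : q ≤ m + 1) (hpar : p % 2 = q % 2) (hu : 1 ≤ u) (hv : 1 ≤ v)
    (huv : u % 2 = v % 2) (h : ((m + 2) * u - m * v) ^ 2 = ((m + 2) * p + m * q) ^ 2) :
    (m - p) * (m + 2 - q) - p * q < u * v := by
  rcases sq_eq_sq_iff_eq_or_eq_neg.mp h with h | h
  · obtain ⟨hu_ge, hv_ge⟩ := le_of_add_two_mul_eq_mul (d := u - p) (e := v + q) hm
      (by nlinarith) (by linarith) (by omega)
    nlinarith
  · obtain ⟨hu_ge, hv_ge⟩ := le_of_add_two_mul_eq_mul (d := u + p) (e := v - q) hm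
      (by omega) (by linarith) (by omega)
    nlinarith

/-- For `m ≥ 2`, `1 ≤ p ≤ m−1`, `1 ≤ q ≤ m+1`, `p ≡ q (mod 2)`, `p' = m−p`, `q' = m+2−q`:
no vanishing curve of level `≤ (p'q'−pq)/2` passes through `(c_m, h^m_{p,q} + pq/2)`,
i.e. `h^m_{u,v} ≠ h^m_{p,q} + pq/2` for all positive `u ≡ v (mod 2)` with
`uv ≤ p'q' − pq`. -/
theorem no_curve_through_shifted_point (m : ℤ) (hm : 2 ≤ m) (p q : ℤ)
    (hp1 : 1 ≤ p) (hp2 : p ≤ m - 1) (hq1 : 1 ≤ q) (hq2 : q ≤ m + 1)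
    (hpar : p % 2 = q % 2) :
    ∀ u v : ℤ, 1 ≤ u → 1 ≤ v → u % 2 = v % 2 → u * v ≤ (m - p) * (m + 2 - q) - p * q →
      hPQ (m : ℝ) u v ≠ hPQ (m : ℝ) p q + (p : ℝ) * q / 2 := by
  intro u v hu hv huv hle heq
  have hm0 : (m : ℝ) ≠ 0 := by exact_mod_cast (by omega : m ≠ 0)
  have hm2 : (m : ℝ) + 2 ≠ 0 := by exact_mod_cast (by omega : m + 2 ≠ 0)
  rw [hPQ_add_mul_div_two hm0 hm2, hPQ_eq_hPQ_iff hm0 hm2] at heq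
  have hsq : ((m + 2) * u - m * v) ^ 2 = ((m + 2) * p + m * q) ^ 2 := by
    rw [← Int.cast_inj (α := ℝ)]
    push_cast at heq ⊢
    linear_combination heq
  exact hle.not_gt (bound_lt_mul_of_sq_eq_sq (by omega) hp1 hp2 hq1 hq2 hpar hu hv huv hsq)
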